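/- Let k ≤ 15, let l satisfy 2^k − k ≤ l ≤ 2^k, and let d ≥ l + k. Then every level-l k-cube in the hypercube Q^d is 0-stackable: for all disjoint subsets S, K of {1,…,d} with |S| = l and |K| = k, letting A = {X : S ⊆ X ⊆ S ∪ K} and letting C_A be the configuration with one cup on each vertex of A ∪ {∅} and no cups elsewhere, Q^d is (C_A, ∅)-stackable. -/

import Mathlib

/-- A cup-stacking move in graph `G`: all cups from `u` are moved to `v`, where
`u ≠ v`, both have at least one cup, and `dist G u v = C u`. -/
def CupMove {V : Type*} [DecidableEq V] (G : SimpleGraph V) (C C' : V → ℕ) : Prop :=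
  ∃ u v : V, u ≠ v ∧ 1 ≤ C u ∧ 1 ≤ C v ∧ G.dist u v = C u ∧
    ∀ w, C' w = if w = u then 0 else if w = v then C u + C v else C w

/-- `G` is `(C, r)`-stackable: some finite sequence of cup-stacking moves starting
from `C` reaches the configuration with all `|C|` cups on `r` and none elsewhere. -/
def IsStackableConf {V : Type*} [Fintype V] [DecidableEq V]
    (G : SimpleGraph V) (C : V → ℕ) (r : V) : Prop :=
  Relation.ReflTransGen (CupMove G) C (fun w => if w = r then ∑ v, C v else 0)

/-- `G` is `r`-stackable: `(𝟏, r)`-stackable where `𝟏` has one cup on each vertex. -/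
def IsStackableAt {V : Type*} [Fintype V] [DecidableEq V]
    (G : SimpleGraph V) (r : V) : Prop :=
  IsStackableConf G (fun _ => 1) r

/-- `G` is stackable: `r`-stackable for every vertex `r`. -/
def IsStackable {V : Type*} [Fintype V] [DecidableEq V] (G : SimpleGraph V) : Prop :=
  ∀ r : V, IsStackableAt G r

open scoped symmDiff in
/-- The d-dimensional hypercube: vertices are subsets of {1,…,d}, adjacent iff
the symmetric difference has exactly one element. -/
def cubeGraph (d : ℕ) : SimpleGraph (Finset (Fin d)) :=
  SimpleGraph.fromRel (fun X Y => (X ∆ Y).card = 1)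

/-!
Cups standing one on each vertex of a set can be gathered onto a root whenever the set splits into
two gatherable parts whose roots lie at distance the size of the first part. Translations
`X ↦ X ∆ T` are isometries of the cube, so if `Q^k` gathers onto `∅` it gathers onto any `T`;
with `#T = 2^k - l`, translating by `S` gathers the level cube onto a vertex of rank `2^k`, and
that pile of `2^k` cups then jumps to `∅`.

`Q^k` gathers onto `∅` by induction on `k`: the lower half `Q^(k-1)` does, and the upper half is
split into pieces each gathered onto a root `r` holding exactly `#r + 1` cups, i.e. as many as
its distance to `∅` once lifted. Such covers with a prescribed excess `#P - #r` are built
recursively from covers of the two halves, from a single translated copy of the whole cube, or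
from six covers of `Q^4` and `Q^5` found by computer; evaluating `coverCheck` shows that this
recursion succeeds in every dimension below 15.
-/

open Finset Function
open scoped symmDiff

section Gathering

variable {V W : Type*} [DecidableEq V] [DecidableEq W] {G : SimpleGraph V}

inductive Gatherable (G : SimpleGraph V) : Finset V → V → Prop
  | single (v : V) : Gatherable G {v} v
  | union {A B : Finset V} {a b : V} : Gatherable G A a → Gatherable G B b → Disjoint A B →
      G.dist a b = #A → Gatherable G (A ∪ B) b

namespace Gatherable

variable {A : Finset V} {r : V}

theorem root_mem (h : Gatherable G A r) : r ∈ A := by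
  induction h with
  | single v => exact mem_singleton_self v
  | union _ _ _ _ _ ihB => exact mem_union_right _ ihB

theorem reflTransGen_cupMove (h : Gatherable G A r) (C : V → ℕ) (hC : ∀ x ∈ A, C x = 1) :
    Relation.ReflTransGen (CupMove G) C
      (fun x => if x ∈ A then (if x = r then #A else 0) else C x) := by
  induction h generalizing C with
  | single v =>
    convert Relation.ReflTransGen.refl using 1
    funext x
    by_cases hx : x = v <;> simp_all
  | @union A B a b hA hB hAB hab ihA ihB =>
    have haA := hA.root_mem
    have hbB := hB.root_mem
    have hne : a ≠ b := fun h => disjoint_left.mp hAB haA (h ▸ hbB)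
    have stackB := ihB C fun x hx => hC x (mem_union_right _ hx)
    have stackA := ihA (fun x => if x ∈ B then (if x = b then #B else 0) else C x) fun x hx => by
      simp only [disjoint_left.mp hAB hx, if_false]
      exact hC x (mem_union_left _ hx)
    have hbA : b ∉ A := disjoint_right.mp hAB hbB
    refine stackB.trans (stackA.tail ⟨a, b, hne, ?_, ?_, ?_, fun w => ?_⟩)
    · simpa [haA] using card_pos.2 ⟨a, haA⟩
    · simpa [hbA, hbB] using card_pos.2 ⟨b, hbB⟩
    · simp [haA, hab]
    · rw [card_union_of_disjoint hAB]
      by_cases hwa : w = a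
      · simp [hwa, haA, hne]
      by_cases hwb : w = b
      · simp [hwb, haA, hbA, hbB, hne.symm]
      · simp only [mem_union, hwa, hwb, if_false]
        split_ifs <;> simp_all

theorem isStackableConf [Fintype V] (h : Gatherable G A r) :
    IsStackableConf G (fun x => if x ∈ A then 1 else 0) r := by
  have := h.reflTransGen_cupMove (fun x => if x ∈ A then 1 else 0) fun x hx => if_pos hx
  unfold IsStackableConf
  convert this using 2 with x
  have hrA := h.root_mem
  by_cases hxr : x = r
  · simp [hxr, hrA]
  · by_cases hxA : x ∈ A <;> simp [hxr, hxA]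

theorem image {G' : SimpleGraph W} {f : V → W} (hf : Injective f)
    (hdist : ∀ x y, G'.dist (f x) (f y) = G.dist x y) (h : Gatherable G A r) :
    Gatherable G' (A.image f) (f r) := by
  induction h with
  | single v => simpa using single (f v)
  | union _ _ hAB hab ihA ihB =>
    rw [image_union]
    exact ihA.union ihB (disjoint_image hf |>.mpr hAB)
      (by rw [hdist, hab, card_image_of_injective _ hf])

end Gatherable
end Gathering

section Hypercube

variable {n n' : ℕ}

theorem cubeGraph_adj {X Y : Finset (Fin n)} : (cubeGraph n).Adj X Y ↔ #(X ∆ Y) = 1 := by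
  refine ⟨fun ⟨_, h⟩ => h.elim id fun h => by rwa [symmDiff_comm], fun h => ⟨?_, .inl h⟩⟩
  rintro rfl
  simp at h

theorem exists_walk_length_eq_card_symmDiff (X Y : Finset (Fin n)) :
    ∃ p : (cubeGraph n).Walk X Y, p.length = #(X ∆ Y) := by
  induction hXY : #(X ∆ Y) generalizing X with
  | zero =>
    obtain rfl : X = Y := by simpa using hXY
    exact ⟨.nil, by simp⟩
  | succ m ih =>
    obtain ⟨a, ha⟩ : (X ∆ Y).Nonempty := card_pos.1 (by omega)
    have hadj : (cubeGraph n).Adj X (X ∆ {a}) := by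
      simp [cubeGraph_adj, symmDiff_symmDiff_cancel_left]
    have hcard : #((X ∆ {a}) ∆ Y) = m := by
      rw [symmDiff_right_comm, symmDiff_of_ge (singleton_subset_iff.2 ha),
        sdiff_singleton_eq_erase, card_erase_of_mem ha, hXY, Nat.add_sub_cancel]
    obtain ⟨p, hp⟩ := ih _ hcard
    exact ⟨.cons hadj p, by simp [hp]⟩

theorem card_symmDiff_le_length {X Y : Finset (Fin n)} (p : (cubeGraph n).Walk X Y) :
    #(X ∆ Y) ≤ p.length := by
  induction p with
  | nil => simp
  | @cons X Z Y hadj p ih =>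
    have := (card_le_card (symmDiff_triangle X Z Y)).trans (card_union_le _ _)
    rw [cubeGraph_adj] at hadj
    simp only [SimpleGraph.Walk.length_cons]
    omega

theorem cubeGraph_dist (X Y : Finset (Fin n)) : (cubeGraph n).dist X Y = #(X ∆ Y) := by
  obtain ⟨p, hp⟩ := exists_walk_length_eq_card_symmDiff X Y
  obtain ⟨q, hq⟩ := (SimpleGraph.Walk.reachable p).exists_walk_length_eq_dist
  exact le_antisymm (hp ▸ SimpleGraph.dist_le p) (hq ▸ card_symmDiff_le_length q)

theorem Gatherable.union_of_card_symmDiff {A B : Finset (Finset (Fin n))} {a b : Finset (Fin n)}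
    (hA : Gatherable (cubeGraph n) A a) (hB : Gatherable (cubeGraph n) B b) (hAB : Disjoint A B)
    (hab : #(a ∆ b) = #A) : Gatherable (cubeGraph n) (A ∪ B) b :=
  hA.union hB hAB (by rw [cubeGraph_dist, hab])

theorem injective_of_card_symmDiff {f : Finset (Fin n) → Finset (Fin n')}
    (hf : ∀ x y, #(f x ∆ f y) = #(x ∆ y)) : Injective f := fun x y hxy => by
  simpa [hxy, eq_comm] using hf x y

theorem Gatherable.image_of_card_symmDiff {A : Finset (Finset (Fin n))} {r : Finset (Fin n)}
    {f : Finset (Fin n) → Finset (Fin n')} (hf : ∀ x y, #(f x ∆ f y) = #(x ∆ y))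
    (h : Gatherable (cubeGraph n) A r) : Gatherable (cubeGraph n') (A.image f) (f r) :=
  h.image (injective_of_card_symmDiff hf) (by simp [cubeGraph_dist, hf])

end Hypercube

/-- With `j = 0`, each gathered pile can then jump to `∅`, at distance `#r` from its root. -/
inductive ExcessCover {n : ℕ} (j : ℕ) : Finset (Finset (Fin n)) → Prop
  | empty : ExcessCover j ∅
  | piece {P U : Finset (Finset (Fin n))} {r : Finset (Fin n)} :
      Gatherable (cubeGraph n) P r → #P = #r + j → Disjoint P U → ExcessCover j U →
      ExcessCover j (P ∪ U)

namespace ExcessCover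

variable {n n' j : ℕ} {U U' : Finset (Finset (Fin n))}

theorem union (h : ExcessCover j U) (h' : ExcessCover j U') (hUU' : Disjoint U U') :
    ExcessCover j (U ∪ U') := by
  induction h with
  | empty => simpa using h'
  | piece hP hcard hPU _ ih =>
    rw [disjoint_union_left] at hUU'
    rw [union_assoc]
    exact .piece hP hcard (disjoint_union_right.2 ⟨hPU, hUU'.1⟩) (ih hUU'.2)

theorem image {c : ℕ} {f : Finset (Fin n) → Finset (Fin n')}
    (hf : ∀ x y, #(f x ∆ f y) = #(x ∆ y)) (hc : ∀ x ∈ U, #(f x) = #x + c)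
    (h : ExcessCover (j + c) U) : ExcessCover j (U.image f) := by
  have hinj := injective_of_card_symmDiff hf
  induction h with
  | empty => simpa using empty
  | piece hP hcard hPU _ ih =>
    rw [image_union]
    refine .piece (hP.image_of_card_symmDiff hf) ?_ (disjoint_image hinj |>.2 hPU)
      (ih fun x hx => hc x (mem_union_right _ hx))
    rw [card_image_of_injective _ hinj, hc _ (mem_union_left _ hP.root_mem), hcard]
    ring

end ExcessCover

theorem Gatherable.union_of_excessCover_zero {n : ℕ} {T U : Finset (Finset (Fin n))}
    (hT : Gatherable (cubeGraph n) T ∅) (hU : ExcessCover 0 U) (hUT : Disjoint U T) :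
    Gatherable (cubeGraph n) (U ∪ T) ∅ := by
  induction hU with
  | empty => simpa using hT
  | piece hP hcard hPU _ ih =>
    rw [disjoint_union_left] at hUT
    rw [union_assoc]
    exact hP.union_of_card_symmDiff (ih hUT.2) (disjoint_union_right.2 ⟨hPU, hUT.1⟩)
      (by rw [← bot_eq_empty, symmDiff_bot, hcard, add_zero])

section Subcube

variable {n : ℕ} {s t : Finset (Fin n)} {a : Fin n}

theorem card_symmDiff_symmDiff_right (x y t : Finset (Fin n)) :
    #((x ∆ t) ∆ (y ∆ t)) = #(x ∆ y) := by
  rw [symmDiff_symmDiff_symmDiff_comm, symmDiff_self, symmDiff_bot]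

theorem image_symmDiff_powerset (ht : t ⊆ s) : s.powerset.image (· ∆ t) = s.powerset := by
  ext x
  simp only [mem_image, mem_powerset]
  refine ⟨?_, fun hx => ⟨x ∆ t, ?_, symmDiff_symmDiff_cancel_right _ _⟩⟩
  · rintro ⟨y, hy, rfl⟩
    exact symmDiff_le_sup.trans (sup_le hy ht)
  · exact symmDiff_le_sup.trans (sup_le hx ht)

theorem Gatherable.powerset_root_of_subset (h : Gatherable (cubeGraph n) s.powerset ∅)
    (ht : t ⊆ s) : Gatherable (cubeGraph n) s.powerset t := by
  simpa [image_symmDiff_powerset ht, ← bot_eq_empty] using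
    h.image_of_card_symmDiff (card_symmDiff_symmDiff_right · · t)

theorem Gatherable.excessCover_powerset {j : ℕ} (h : Gatherable (cubeGraph n) s.powerset ∅)
    (hj : 2 ^ #s ≤ j + #s) (hj' : j ≤ 2 ^ #s) : ExcessCover j s.powerset := by
  obtain ⟨t, hts, ht⟩ := exists_subset_card_eq (show 2 ^ #s - j ≤ #s by omega)
  simpa using ExcessCover.piece (h.powerset_root_of_subset hts) (by simp [ht]; omega)
    (disjoint_empty_right _) .empty

theorem symmDiff_singleton_of_notMem (ha : a ∉ t) : t ∆ {a} = insert a t := by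
  rw [(disjoint_singleton_right.2 ha).symmDiff_eq_sup, sup_eq_union, union_comm, insert_eq]

theorem powerset_insert_eq_union_image_symmDiff (ha : a ∉ s) :
    (insert a s).powerset = s.powerset ∪ s.powerset.image (· ∆ {a}) := by
  rw [powerset_insert]
  congr 1
  exact image_congr fun t ht => (symmDiff_singleton_of_notMem
    fun hat => ha (mem_powerset.1 ht hat)).symm

theorem disjoint_powerset_image_symmDiff_singleton (ha : a ∉ s) :
    Disjoint s.powerset (s.powerset.image (· ∆ {a})) := by
  simp only [disjoint_left, mem_powerset, mem_image, not_exists, not_and]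
  rintro _ hts u hus rfl
  exact ha (hts (by simpa [mem_symmDiff] using fun hau => ha (hus hau)))

theorem ExcessCover.image_symmDiff_singleton {j : ℕ} (h : ExcessCover (j + 1) s.powerset)
    (ha : a ∉ s) : ExcessCover j (s.powerset.image (· ∆ {a})) := by
  refine h.image (card_symmDiff_symmDiff_right · · {a}) fun t ht => ?_
  have hat : a ∉ t := fun hat => ha (mem_powerset.1 ht hat)
  rw [symmDiff_singleton_of_notMem hat, card_insert_of_notMem hat]

theorem Gatherable.powerset_insert (h : Gatherable (cubeGraph n) s.powerset ∅)
    (hc : ExcessCover 1 s.powerset) (ha : a ∉ s) :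
    Gatherable (cubeGraph n) (insert a s).powerset ∅ := by
  rw [powerset_insert_eq_union_image_symmDiff ha, union_comm]
  exact h.union_of_excessCover_zero (hc.image_symmDiff_singleton ha)
    (disjoint_powerset_image_symmDiff_singleton ha).symm

theorem ExcessCover.powerset_insert {j : ℕ} (h : ExcessCover j s.powerset)
    (h' : ExcessCover (j + 1) s.powerset) (ha : a ∉ s) : ExcessCover j (insert a s).powerset := by
  rw [powerset_insert_eq_union_image_symmDiff ha]
  exact h.union (h'.image_symmDiff_singleton ha) (disjoint_powerset_image_symmDiff_singleton ha)

theorem image_map_univ_eq_powerset {m : ℕ} (e : Fin m ↪ Fin n) :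
    (univ : Finset (Finset (Fin m))).image (·.map e) = (univ.map e).powerset := by
  ext x
  simp only [mem_image, mem_univ, true_and, mem_powerset, subset_map_iff, subset_univ, eq_comm]

theorem card_map_symmDiff_map {m : ℕ} (e : Fin m ↪ Fin n) (x y : Finset (Fin m)) :
    #(x.map e ∆ y.map e) = #(x ∆ y) := by
  rw [map_eq_image, map_eq_image, ← image_symmDiff _ _ e.injective,
    card_image_of_injective _ e.injective]

theorem ExcessCover.powerset_of_univ {m j : ℕ}
    (h : ExcessCover j (univ : Finset (Finset (Fin m)))) (hs : #s = m) :
    ExcessCover j s.powerset := by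
  rw [← map_orderEmbOfFin_univ s hs, ← image_map_univ_eq_powerset]
  exact h.image (c := 0) (card_map_symmDiff_map _) fun x _ => card_map _

end Subcube

section Certificates

/- Covers found by computer search. `t ⇝ u` stacks the pile gathered by `t` onto the root of `u`;
`decide` checks disjointness and the distance condition. -/
local notation:65 A:66 " ⇝ " B:65 => Gatherable.union_of_card_symmDiff A B (by decide) (by decide)

theorem excessCover_univ_four_three : ExcessCover 3 (univ : Finset (Finset (Fin 4))) := by
  convert (show ExcessCover (n := 4) 3 _ from
    .piece (.single {0,1,3} ⇝ (.single {3} ⇝ .single {2,3}) ⇝ ((.single {0,2} ⇝ .single {2}) ⇝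
        .single {1}) ⇝ .single {0,1,2,3})
      (by decide) (by decide) <|
    .piece (.single {1,2} ⇝ (((.single {0,2,3} ⇝ .single {0,3}) ⇝ .single {1,3}) ⇝ .single {0}) ⇝
        .single {1,2,3})
      (by decide) (by decide) <|
    .piece ((.single {0,1,2} ⇝ .single {0,1}) ⇝ .single ∅)
      (by decide) (by decide) <|
    .empty) using 1
  decide

theorem excessCover_univ_four_four : ExcessCover 4 (univ : Finset (Finset (Fin 4))) := by
  convert (show ExcessCover (n := 4) 4 _ from
    .piece ((.single {0,1} ⇝ .single {1}) ⇝ .single {2,3} ⇝ (.single {0,3} ⇝ .single {0,2,3}) ⇝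
        .single {1,2} ⇝ .single {1,2,3})
      (by decide) (by decide) <|
    .piece ((((.single {0,1,2} ⇝ .single {0,1,2,3}) ⇝ .single {0,2}) ⇝ .single {0,1,3}) ⇝
        .single {2})
      (by decide) (by decide) <|
    .piece ((.single {3} ⇝ .single {1,3}) ⇝ .single {0} ⇝ .single ∅)
      (by decide) (by decide) <|
    .empty) using 1
  decide

theorem excessCover_univ_five_seven : ExcessCover 7 (univ : Finset (Finset (Fin 5))) := by
  convert (show ExcessCover (n := 5) 7 _ from
    .piece (.single {0,2,3,4} ⇝ (.single {0,3} ⇝ .single {0,3,4}) ⇝ (.single {0,1,2,3} ⇝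
        .single {0,1,2}) ⇝ ((.single {1,2,3} ⇝ .single {1,3}) ⇝ .single {0,1}) ⇝
        ((.single {0,2,4} ⇝ .single {0,2}) ⇝ .single {1,2}) ⇝ .single {0,1,2,3,4})
      (by decide) (by decide) <|
    .piece (((.single {1,4} ⇝ .single {1,3,4}) ⇝ .single {1}) ⇝ (.single {3} ⇝ .single {3,4}) ⇝
        ((((.single {0,1,4} ⇝ .single {0,1,2,4}) ⇝ .single {1,2,3,4}) ⇝ .single {0,1,3}) ⇝
        .single {2}) ⇝ .single {0,1,3,4})
      (by decide) (by decide) <|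
    .piece ((.single {0} ⇝ .single {0,4}) ⇝ ((.single {2,3} ⇝ .single {2,3,4}) ⇝ .single {0,2,3}) ⇝
        (.single {4} ⇝ .single ∅) ⇝ .single {1,2,4} ⇝ .single {2,4})
      (by decide) (by decide) <|
    .empty) using 1
  decide

theorem excessCover_univ_five_eight : ExcessCover 8 (univ : Finset (Finset (Fin 5))) := by
  convert (show ExcessCover (n := 5) 8 _ from
    .piece ((.single {0,1,3,4} ⇝ .single {0,3,4}) ⇝ (.single {1,4} ⇝ .single {1,3,4}) ⇝
        (((.single {1,2,4} ⇝ .single {2,4}) ⇝ .single {1,2}) ⇝ .single {0}) ⇝ ((.single {1,2,3} ⇝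
        .single {2,3}) ⇝ .single {3,4}) ⇝ .single {0,2,3,4} ⇝ .single {0,1,2,3,4})
      (by decide) (by decide) <|
    .piece ((.single {0,3} ⇝ .single {0,1,3}) ⇝ .single {0,1} ⇝ (.single {0,1,2,3} ⇝
        .single {0,1,2}) ⇝ (((.single {0,2,4} ⇝ .single {0,1,2,4}) ⇝ .single {0,2}) ⇝
        .single {2,3,4}) ⇝ .single {0,4} ⇝ .single {0,1,4})
      (by decide) (by decide) <|
    .piece ((((.single {1,3} ⇝ .single {3}) ⇝ .single {0,2,3}) ⇝ .single {1,2,3,4}) ⇝ .single {2} ⇝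
        .single {4} ⇝ .single {1} ⇝ .single ∅)
      (by decide) (by decide) <|
    .empty) using 1
  decide

theorem excessCover_univ_five_nine : ExcessCover 9 (univ : Finset (Finset (Fin 5))) := by
  convert (show ExcessCover (n := 5) 9 _ from
    .piece ((((.single {1,2} ⇝ .single {1,2,4}) ⇝ .single {0,1,4}) ⇝ .single {0,3}) ⇝
        ((((.single {0,2,4} ⇝ .single {0,4}) ⇝ .single {1,4}) ⇝ .single {0,1,2,3,4}) ⇝
        .single {0}) ⇝ ((.single {0,1,2,3} ⇝ .single {0,1,2}) ⇝ .single {0,1,3}) ⇝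
        .single {1,2,3,4})
      (by decide) (by decide) <|
    .piece (.single {2,3} ⇝ (.single {2,4} ⇝ .single {4}) ⇝ (.single {1,3} ⇝ .single {1,3,4}) ⇝
        ((.single {0,3,4} ⇝ .single {0,1,3,4}) ⇝ .single {0,1}) ⇝ .single {3,4} ⇝ .single {3})
      (by decide) (by decide) <|
    .piece ((((.single {0,2,3,4} ⇝ .single {0,2,3}) ⇝ .single {1,2,3}) ⇝ .single {0,1,2,4}) ⇝
        .single {1} ⇝ ((.single {0,2} ⇝ .single {2}) ⇝ .single {2,3,4}) ⇝ .single ∅)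
      (by decide) (by decide) <|
    .empty) using 1
  decide

theorem excessCover_univ_five_ten : ExcessCover 10 (univ : Finset (Finset (Fin 5))) := by
  convert (show ExcessCover (n := 5) 10 _ from
    .piece (.single {2,3} ⇝ (.single {0,1,2,4} ⇝ .single {0,1,2}) ⇝ (.single {1,2} ⇝
        .single {1,2,4}) ⇝ ((((.single {0,2,3,4} ⇝ .single {0,2,3}) ⇝ .single {0,1,3}) ⇝
        .single {0,2}) ⇝ .single {0,1,3,4}) ⇝ .single {2})
      (by decide) (by decide) <|
    .piece (((.single {1,2,3} ⇝ .single {0,1,2,3}) ⇝ .single {0,3}) ⇝ ((.single {2,3,4} ⇝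
        .single {2,4}) ⇝ .single {1,2,3,4}) ⇝ (((.single {1} ⇝ .single {0,1}) ⇝ .single {1,3}) ⇝
        .single {0,1,2,3,4}) ⇝ .single {4})
      (by decide) (by decide) <|
    .piece ((.single {0,2,4} ⇝ .single {0,4}) ⇝ .single {3} ⇝ (.single {0,3,4} ⇝ .single {3,4}) ⇝
        .single {0} ⇝ ((.single {1,4} ⇝ .single {0,1,4}) ⇝ .single {1,3,4}) ⇝ .single ∅)
      (by decide) (by decide) <|
    .empty) using 1
  decide

end Certificates

abbrev IsSpecialCover (m j : ℕ) : Prop :=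
  m = 4 ∧ (j = 3 ∨ j = 4) ∨ m = 5 ∧ 7 ≤ j ∧ j ≤ 10

theorem excessCover_univ_of_isSpecialCover {m j : ℕ} (h : IsSpecialCover m j) :
    ExcessCover j (univ : Finset (Finset (Fin m))) := by
  obtain ⟨rfl, rfl | rfl⟩ | ⟨rfl, h⟩ := h
  · exact excessCover_univ_four_three
  · exact excessCover_univ_four_four
  · obtain rfl | rfl | rfl | rfl : j = 7 ∨ j = 8 ∨ j = 9 ∨ j = 10 := by omega
    · exact excessCover_univ_five_seven
    · exact excessCover_univ_five_eight
    · exact excessCover_univ_five_nine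
    · exact excessCover_univ_five_ten

/-- `coverCheck m j` certifies an excess-`j` cover of `Q^m`: a single piece, a special cover, or
covers of excess `j` and `j + 1` of the two halves `Q^(m-1)`. -/
def coverCheck : ℕ → ℕ → Bool
  | 0, j => j == 1
  | m + 1, j =>
    (2 ^ (m + 1) ≤ j + (m + 1) && j ≤ 2 ^ (m + 1)) || decide (IsSpecialCover (m + 1) j) ||
      (coverCheck m j && coverCheck m (j + 1))

theorem coverCheck_one_of_lt_fifteen : ∀ i < 15, coverCheck i 1 = true := by decide

theorem gatherable_and_excessCover_powerset {n : ℕ} (s : Finset (Fin n))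
    (hs : ∀ i < #s, coverCheck i 1 = true) :
    Gatherable (cubeGraph n) s.powerset ∅ ∧
      ∀ j, coverCheck #s j = true → ExcessCover j s.powerset := by
  induction s using Finset.induction_on with
  | empty =>
    have h : Gatherable (cubeGraph n) (∅ : Finset (Fin n)).powerset ∅ := by
      simpa using Gatherable.single (G := cubeGraph n) ∅
    refine ⟨h, fun j hj => h.excessCover_powerset ?_ ?_⟩ <;> simp_all [coverCheck]
  | insert a s ha ih =>
    rw [card_insert_of_notMem ha] at hs ⊢
    obtain ⟨hg, hc⟩ := ih fun i hi => hs i (by omega)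
    have hg' := hg.powerset_insert (hc 1 (hs _ (by omega))) ha
    refine ⟨hg', fun j hj => ?_⟩
    simp only [coverCheck, Bool.or_eq_true, Bool.and_eq_true, decide_eq_true_eq] at hj
    rcases hj with (⟨hj, hj'⟩ | hj) | ⟨hj, hj'⟩
    · rw [← card_insert_of_notMem ha] at hj hj'
      exact hg'.excessCover_powerset hj hj'
    · exact (excessCover_univ_of_isSpecialCover hj).powerset_of_univ (card_insert_of_notMem ha)
    · exact (hc j hj).powerset_insert (hc (j + 1) hj') ha

theorem mem_image_symmDiff_powerset {n : ℕ} {S K X : Finset (Fin n)} (hSK : Disjoint S K) :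
    X ∈ K.powerset.image (· ∆ S) ↔ S ⊆ X ∧ X ⊆ S ∪ K := by
  simp only [mem_image, mem_powerset]
  constructor
  · rintro ⟨Y, hYK, rfl⟩
    rw [(disjoint_of_subset_right hYK hSK).symm.symmDiff_eq_sup, sup_eq_union]
    exact ⟨subset_union_right, union_comm S K ▸ union_subset_union_left hYK⟩
  · rintro ⟨hSX, hXSK⟩
    refine ⟨X \ S, ?_, ?_⟩
    · exact sdiff_le_iff.2 hXSK
    · rw [← symmDiff_of_ge hSX, symmDiff_symmDiff_cancel_right]

theorem levelCube_high_stackable_general (k l d : ℕ) (hk : k ≤ 15)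
    (hl1 : 2 ^ k - k ≤ l) (hl2 : l ≤ 2 ^ k)
    (S K : Finset (Fin d)) (hdisj : Disjoint S K) (hS : S.card = l) (hK : K.card = k) :
    IsStackableConf (cubeGraph d)
      (fun X => if (S ⊆ X ∧ X ⊆ S ∪ K) ∨ X = ∅ then 1 else 0) ∅ := by
  have hcube := (gatherable_and_excessCover_powerset K fun i hi =>
    coverCheck_one_of_lt_fifteen i (by omega)).1
  obtain ⟨T, hTK, hT⟩ := exists_subset_card_eq (show 2 ^ k - l ≤ #K by omega)
  have hlevel := (hcube.powerset_root_of_subset hTK).image_of_card_symmDiff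
    (card_symmDiff_symmDiff_right · · S)
  have hroot : #(T ∆ S) = 2 ^ k := by
    rw [(disjoint_of_subset_left hTK hdisj.symm).symmDiff_eq_sup, sup_eq_union,
      card_union_of_disjoint (disjoint_of_subset_left hTK hdisj.symm), hT, hS]
    omega
  have hSne : S.Nonempty := card_pos.1 (by have := k.lt_two_pow_self; omega)
  have hempty : ∅ ∉ K.powerset.image (· ∆ S) := fun h =>
    hSne.ne_empty (subset_empty.1 ((mem_image_symmDiff_powerset hdisj).1 h).1)
  have hall := hlevel.union_of_card_symmDiff (.single ∅) (disjoint_singleton_right.2 hempty) (by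
    rw [← bot_eq_empty, symmDiff_bot, hroot, card_image_of_injective _ (symmDiff_left_injective S),
      card_powerset, hK])
  convert hall.isStackableConf using 3 with X
  simp [mem_image_symmDiff_powerset hdisj, or_comm]

theorem levelCube_high_stackable (k l d : ℕ) (hk : k ≤ 15)
    (hl1 : 2 ^ k - k ≤ l) (hl2 : l ≤ 2 ^ k) (hd : l + k ≤ d)
    (S K : Finset (Fin d)) (hdisj : Disjoint S K) (hS : S.card = l) (hK : K.card = k) :
    IsStackableConf (cubeGraph d)
      (fun X => if (S ⊆ X ∧ X ⊆ S ∪ K) ∨ X = ∅ then 1 else 0) ∅ :=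
  levelCube_high_stackable_general k l d hk hl1 hl2 S K hdisj hS hK
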